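/- arXiv:2508.01256 — 6 statements merged into one kernel-verified Lean document; each statement's English description precedes it below -/
import Mathlib

section
/- Let Lx, Ly > 0 and Ω = [0,Lx] × [0,Ly] ⊂ ℝ². Suppose φ : ℝ² → ℝ is continuous and periodic with periods Lx in the first variable and Ly in the second; c : ℝ × ℝ² → ℝ is continuously differentiable and spatially periodic with the same periods; wˣ, wʸ : ℝ × ℝ² → ℝ are continuously differentiable and spatially periodic with the same periods; g : ℝ × ℝ² → ℝ is continuous; and for all t ∈ [0,T] and p ∈ ℝ², φ(p)·∂ₜc(t,p) + ∂₁wˣ(t,p) + ∂₂wʸ(t,p) = g(t,p), where ∂₁, ∂₂ denote partial derivatives in the two spatial variables. Then for every t ∈ [0,T], ∫_Ω φ(p)·c(t,p) dp = ∫_Ω φ(p)·c(0,p) dp + ∫₀ᵗ ∫_Ω g(s,p) dp ds. -/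
/-!
Differentiating the weighted mass under the integral sign and integrating the equation over `Ω`,
the flux terms drop out: by Fubini and the fundamental theorem of calculus along coordinate lines,
`∫_Ω ∂₁wˣ(s,·) = ∫ (wˣ(s,(Lx,y)) - wˣ(s,(0,y))) dy = 0` by periodicity, and likewise
for `∂₂wʸ`.
Hence the mass has derivative `∫_Ω g(s,·)` on `[0,T]`, and the fundamental theorem of calculus
in time concludes.
-/

open MeasureTheory Set

section PartialDeriv

variable {𝕜 : Type*} [NontriviallyNormedField 𝕜] {E F : Type*}
  [NormedAddCommGroup E] [NormedSpace 𝕜 E] [NormedAddCommGroup F] [NormedSpace 𝕜 F]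

theorem DifferentiableAt.deriv_comp_prodMk_left {f : 𝕜 × F → E} {x : 𝕜} {y : F}
    (hf : DifferentiableAt 𝕜 f (x, y)) :
    deriv (fun t => f (t, y)) x = fderiv 𝕜 f (x, y) (1, 0) :=
  (hf.hasFDerivAt.comp_hasDerivAt x ((hasDerivAt_id x).prodMk (hasDerivAt_const x y))).deriv

theorem DifferentiableAt.deriv_comp_prodMk_right {f : F × 𝕜 → E} {x : F} {y : 𝕜}
    (hf : DifferentiableAt 𝕜 f (x, y)) :
    deriv (fun t => f (x, t)) y = fderiv 𝕜 f (x, y) (0, 1) :=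
  (hf.hasFDerivAt.comp_hasDerivAt y ((hasDerivAt_const y x).prodMk (hasDerivAt_id y))).deriv

theorem ContDiff.continuous_deriv_comp_prodMk_left {f : 𝕜 × F → E} (hf : ContDiff 𝕜 1 f) :
    Continuous fun q : 𝕜 × F => deriv (fun t => f (t, q.2)) q.1 := by
  simp only [fun q : 𝕜 × F => (hf.differentiable one_ne_zero q).deriv_comp_prodMk_left]
  exact (hf.continuous_fderiv_apply one_ne_zero).comp (continuous_id.prodMk continuous_const)

theorem ContDiff.continuous_deriv_comp_prodMk_right {f : F × 𝕜 → E} (hf : ContDiff 𝕜 1 f) :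
    Continuous fun q : F × 𝕜 => deriv (fun t => f (q.1, t)) q.2 := by
  simp only [fun q : F × 𝕜 => (hf.differentiable one_ne_zero q).deriv_comp_prodMk_right]
  exact (hf.continuous_fderiv_apply one_ne_zero).comp (continuous_id.prodMk continuous_const)

end PartialDeriv

section Rectangle

variable {E : Type*} [NormedAddCommGroup E] [NormedSpace ℝ E] [CompleteSpace E]

theorem ContDiff.integral_Icc_deriv_eq_sub {f : ℝ → E} (hf : ContDiff ℝ 1 f) {a b : ℝ}
    (hab : a ≤ b) :
    ∫ x in Icc a b, deriv f x = f b - f a := by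
  rw [integral_Icc_eq_integral_Ioc, ← intervalIntegral.integral_of_le hab]
  exact intervalIntegral.integral_deriv_eq_sub (fun x _ => hf.differentiable one_ne_zero x)
    ((hf.continuous_deriv le_rfl).intervalIntegrable a b)

theorem ContDiff.setIntegral_Icc_prod_Icc_deriv_fst_eq_zero {w : ℝ × ℝ → E}
    (hw : ContDiff ℝ 1 w) {a b c d : ℝ} (hab : a ≤ b) (hper : ∀ y, w (b, y) = w (a, y)) :
    ∫ p in Icc a b ×ˢ Icc c d, deriv (fun x => w (x, p.2)) p.1 = 0 := by
  have hint : IntegrableOn (fun p : ℝ × ℝ => deriv (fun x => w (x, p.swap.2)) p.swap.1)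
      (Icc c d ×ˢ Icc a b) (volume.prod volume) :=
    (hw.continuous_deriv_comp_prodMk_left.comp continuous_swap).continuousOn.integrableOn_compact
      (isCompact_Icc.prod isCompact_Icc)
  have hslice (y : ℝ) : ∫ x in Icc a b, deriv (fun x => w (x, y)) x = 0 := by
    rw [ContDiff.integral_Icc_deriv_eq_sub (f := fun x => w (x, y)) (by fun_prop) hab]
    simp [hper]
  rw [Measure.volume_eq_prod, ← setIntegral_prod_swap, setIntegral_prod _ hint]
  simp only [Prod.swap_prod_mk, hslice, integral_zero]

theorem ContDiff.setIntegral_Icc_prod_Icc_deriv_snd_eq_zero {w : ℝ × ℝ → E}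
    (hw : ContDiff ℝ 1 w) {a b c d : ℝ} (hcd : c ≤ d) (hper : ∀ x, w (x, d) = w (x, c)) :
    ∫ p in Icc a b ×ˢ Icc c d, deriv (fun y => w (p.1, y)) p.2 = 0 := by
  have hint : IntegrableOn (fun p : ℝ × ℝ => deriv (fun y => w (p.1, y)) p.2)
      (Icc a b ×ˢ Icc c d) (volume.prod volume) :=
    hw.continuous_deriv_comp_prodMk_right.continuousOn.integrableOn_compact
      (isCompact_Icc.prod isCompact_Icc)
  have hslice (x : ℝ) : ∫ y in Icc c d, deriv (fun y => w (x, y)) y = 0 := by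
    rw [ContDiff.integral_Icc_deriv_eq_sub (f := fun y => w (x, y)) (by fun_prop) hcd]
    simp [hper]
  rw [Measure.volume_eq_prod, setIntegral_prod _ hint]
  simp only [hslice, integral_zero]

theorem ContDiff.setIntegral_Icc_prod_Icc_divergence_eq_zero {u v : ℝ × ℝ → E}
    (hu : ContDiff ℝ 1 u) (hv : ContDiff ℝ 1 v) {a b c d : ℝ} (hab : a ≤ b) (hcd : c ≤ d)
    (hu_per : ∀ y, u (b, y) = u (a, y)) (hv_per : ∀ x, v (x, d) = v (x, c)) :
    ∫ p in Icc a b ×ˢ Icc c d,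
      (deriv (fun x => u (x, p.2)) p.1 + deriv (fun y => v (p.1, y)) p.2) = 0 := by
  have hK : IsCompact (Icc a b ×ˢ Icc c d) := isCompact_Icc.prod isCompact_Icc
  rw [integral_add
      (hu.continuous_deriv_comp_prodMk_left.continuousOn.integrableOn_compact hK)
      (hv.continuous_deriv_comp_prodMk_right.continuousOn.integrableOn_compact hK),
    hu.setIntegral_Icc_prod_Icc_deriv_fst_eq_zero hab hu_per,
    hv.setIntegral_Icc_prod_Icc_deriv_snd_eq_zero hcd hv_per, add_zero]

end Rectangle

theorem hasDerivAt_setIntegral_of_continuous {Y E : Type*} [TopologicalSpace Y] [T2Space Y]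
    [MeasurableSpace Y] [OpensMeasurableSpace Y] {μ : Measure Y} [IsFiniteMeasureOnCompacts μ]
    [NormedAddCommGroup E] [NormedSpace ℝ E] [SecondCountableTopologyEither Y E]
    {F F' : ℝ → Y → E} (hF : Continuous F.uncurry) (hF' : Continuous F'.uncurry)
    (hderiv : ∀ x y, HasDerivAt (F · y) (F' x y) x) {s : Set Y} (hs : IsCompact s) (x₀ : ℝ) :
    HasDerivAt (fun x => ∫ y in s, F x y ∂μ) (∫ y in s, F' x₀ y ∂μ) x₀ := by
  obtain ⟨M, hM⟩ :=
    ((isCompact_closedBall x₀ 1).prod hs).exists_bound_of_continuousOn hF'.continuousOn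
  have hbound : ∀ᵐ y ∂μ.restrict s, ∀ x ∈ Metric.ball x₀ 1, ‖F' x y‖ ≤ M :=
    (ae_restrict_iff' hs.measurableSet).2 <| ae_of_all _ fun y hy x hx =>
      hM (x, y) ⟨Metric.ball_subset_closedBall hx, hy⟩
  exact (hasDerivAt_integral_of_dominated_loc_of_deriv_le (Metric.ball_mem_nhds x₀ one_pos)
    (.of_forall fun x => (hF.uncurry_left x).aestronglyMeasurable)
    ((hF.uncurry_left x₀).continuousOn.integrableOn_compact hs)
    (hF'.uncurry_left x₀).aestronglyMeasurable hbound (integrableOn_const hs.measure_ne_top)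
    (ae_of_all _ fun y x _ => hderiv x y)).2

theorem mass_conservation_general
    (Lx Ly T : ℝ) (hLx : 0 < Lx) (hLy : 0 < Ly)
    (φ : ℝ × ℝ → ℝ) (c wx wy g : ℝ × (ℝ × ℝ) → ℝ)
    (hφcont : Continuous φ)
    (hc : ContDiff ℝ 1 c)
    (hwx : ContDiff ℝ 1 wx)
    (hwxpx : ∀ t x y : ℝ, wx (t, (x + Lx, y)) = wx (t, (x, y)))
    (hwy : ContDiff ℝ 1 wy)
    (hwypy : ∀ t x y : ℝ, wy (t, (x, y + Ly)) = wy (t, (x, y)))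
    (hgcont : Continuous g)
    (hpde : ∀ t ∈ Icc (0 : ℝ) T, ∀ p : ℝ × ℝ,
      φ p * deriv (fun s => c (s, p)) t
        + deriv (fun x => wx (t, (x, p.2))) p.1
        + deriv (fun y => wy (t, (p.1, y))) p.2 = g (t, p)) :
    ∀ t ∈ Icc (0 : ℝ) T,
      ∫ p in Icc (0 : ℝ) Lx ×ˢ Icc (0 : ℝ) Ly, φ p * c (t, p)
        = (∫ p in Icc (0 : ℝ) Lx ×ˢ Icc (0 : ℝ) Ly, φ p * c (0, p))
          + ∫ s in (0 : ℝ)..t, ∫ p in Icc (0 : ℝ) Lx ×ˢ Icc (0 : ℝ) Ly, g (s, p) := by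
  intro t ht
  set Ω := Icc (0 : ℝ) Lx ×ˢ Icc (0 : ℝ) Ly
  have hΩ : IsCompact Ω := isCompact_Icc.prod isCompact_Icc
  have hc_diff := hc.differentiable one_ne_zero
  have hct := hc.continuous_deriv_comp_prodMk_left
  have hmass (s : ℝ) : HasDerivAt (fun τ => ∫ p in Ω, φ p * c (τ, p))
      (∫ p in Ω, φ p * deriv (fun τ => c (τ, p)) s) s :=
    hasDerivAt_setIntegral_of_continuous (F := fun τ p => φ p * c (τ, p))
      (F' := fun τ p => φ p * deriv (fun τ => c (τ, p)) τ)
      ((hφcont.comp continuous_snd).mul hc.continuous) ((hφcont.comp continuous_snd).mul hct)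
      (fun τ p => (DifferentiableAt.hasDerivAt (by fun_prop)).const_mul (φ p)) hΩ s
  have hsource : ∀ s ∈ Icc (0 : ℝ) T,
      ∫ p in Ω, φ p * deriv (fun τ => c (τ, p)) s = ∫ p in Ω, g (s, p) := by
    intro s hs
    have hu : ContDiff ℝ 1 fun p => wx (s, p) := by fun_prop
    have hv : ContDiff ℝ 1 fun p => wy (s, p) := by fun_prop
    have htime : Continuous fun p => φ p * deriv (fun τ => c (τ, p)) s :=
      hφcont.mul (hct.comp (continuous_const.prodMk continuous_id))
    have hflux : Continuous fun p : ℝ × ℝ =>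
        deriv (fun x => wx (s, (x, p.2))) p.1 + deriv (fun y => wy (s, (p.1, y))) p.2 :=
      hu.continuous_deriv_comp_prodMk_left.add hv.continuous_deriv_comp_prodMk_right
    simp_rw [← hpde s hs, add_assoc]
    rw [integral_add (htime.continuousOn.integrableOn_compact hΩ)
        (hflux.continuousOn.integrableOn_compact hΩ),
      hu.setIntegral_Icc_prod_Icc_divergence_eq_zero hv hLx.le hLy.le
        (fun y => by simpa using hwxpx s 0 y) (fun x => by simpa using hwypy s x 0), add_zero]
  have hsource_cont : Continuous fun s => ∫ p in Ω, g (s, p) :=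
    continuous_parametric_integral_of_continuous (f := fun s p => g (s, p)) hgcont hΩ
  have hIcc : uIcc 0 t ⊆ Icc 0 T := uIcc_subset_Icc (left_mem_Icc.2 (ht.1.trans ht.2)) ht
  have hftc := intervalIntegral.integral_eq_sub_of_hasDerivAt
    (fun s hs => hsource s (hIcc hs) ▸ hmass s) (hsource_cont.intervalIntegrable 0 t)
  linarith

/-- **Mass conservation** (Lemma 2.1).  For the transport equation
`φ ∂ₜc + ∂₁wˣ + ∂₂wʸ = g` on the rectangle `Ω = [0,Lx] × [0,Ly]` with periodic
boundary conditions, the weighted mass `∫_Ω φ c(t,·)` equals the initial mass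
plus the time-integrated source. -/
theorem mass_conservation
    (Lx Ly T : ℝ) (hLx : 0 < Lx) (hLy : 0 < Ly) (hT : 0 ≤ T)
    (φ : ℝ × ℝ → ℝ) (c wx wy g : ℝ × (ℝ × ℝ) → ℝ)
    (hφcont : Continuous φ)
    (hφpx : ∀ x y : ℝ, φ (x + Lx, y) = φ (x, y))
    (hφpy : ∀ x y : ℝ, φ (x, y + Ly) = φ (x, y))
    (hc : ContDiff ℝ 1 c)
    (hcpx : ∀ t x y : ℝ, c (t, (x + Lx, y)) = c (t, (x, y)))
    (hcpy : ∀ t x y : ℝ, c (t, (x, y + Ly)) = c (t, (x, y)))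
    (hwx : ContDiff ℝ 1 wx)
    (hwxpx : ∀ t x y : ℝ, wx (t, (x + Lx, y)) = wx (t, (x, y)))
    (hwxpy : ∀ t x y : ℝ, wx (t, (x, y + Ly)) = wx (t, (x, y)))
    (hwy : ContDiff ℝ 1 wy)
    (hwypx : ∀ t x y : ℝ, wy (t, (x + Lx, y)) = wy (t, (x, y)))
    (hwypy : ∀ t x y : ℝ, wy (t, (x, y + Ly)) = wy (t, (x, y)))
    (hgcont : Continuous g)
    (hpde : ∀ t ∈ Icc (0 : ℝ) T, ∀ p : ℝ × ℝ,
      φ p * deriv (fun s => c (s, p)) t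
        + deriv (fun x => wx (t, (x, p.2))) p.1
        + deriv (fun y => wy (t, (p.1, y))) p.2 = g (t, p)) :
    ∀ t ∈ Icc (0 : ℝ) T,
      ∫ p in Icc (0 : ℝ) Lx ×ˢ Icc (0 : ℝ) Ly, φ p * c (t, p)
        = (∫ p in Icc (0 : ℝ) Lx ×ˢ Icc (0 : ℝ) Ly, φ p * c (0, p))
          + ∫ s in (0 : ℝ)..t, ∫ p in Icc (0 : ℝ) Lx ×ˢ Icc (0 : ℝ) Ly, g (s, p) :=
  mass_conservation_general Lx Ly T hLx hLy φ c wx wy g hφcont hc hwx hwxpx hwy hwypy hgcont hpde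
end

section
/- For every cell-centered grid function ω, every x-face grid function νˣ, and every y-face grid function νʸ: (L_y(δ_x νˣ), ω) = −(L_y νˣ, δ_x ω) and (L_x(δ_y νʸ), ω) = −(L_x νʸ, δ_y ω). Here on the left-hand sides δ_x (resp. δ_y) maps face functions to cell-centered functions and L_y (resp. L_x) acts on the resulting cell-centered function, while on the right-hand sides δ_x (resp. δ_y) maps the cell-centered function ω to a face function and L_y (resp. L_x) acts on the face function νˣ (resp. νʸ). -/
open Finset

/-- A periodic grid function on the `Nx × Ny` staggered grid (periodicity is
automatic in the `ZMod` indexing).  The same index set represents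
cell-centered, x-face and y-face values. -/
abbrev GridFn (Nx Ny : ℕ) := ZMod Nx × ZMod Ny → ℝ

variable {Nx Ny : ℕ}

/-- Discrete `L²` inner product `(ω, σ) = ∑ᵢⱼ hx·hy·ωᵢⱼ·σᵢⱼ`. -/
noncomputable def gip [NeZero Nx] [NeZero Ny] (hx hy : ℝ) (ω σ : GridFn Nx Ny) : ℝ :=
  ∑ p : ZMod Nx × ZMod Ny, hx * hy * ω p * σ p

/-- Discrete `L²` norm. -/
noncomputable def gnorm [NeZero Nx] [NeZero Ny] (hx hy : ℝ) (ω : GridFn Nx Ny) : ℝ :=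
  Real.sqrt (gip hx hy ω ω)

/-- `δ_x` mapping cell-centered functions to x-face functions. -/
noncomputable def dxc (hx : ℝ) (ω : GridFn Nx Ny) : GridFn Nx Ny :=
  fun p => (ω (p.1 + 1, p.2) - ω p) / hx

/-- `δ_x` mapping x-face functions to cell-centered functions. -/
noncomputable def dxf (hx : ℝ) (ν : GridFn Nx Ny) : GridFn Nx Ny :=
  fun p => (ν p - ν (p.1 - 1, p.2)) / hx

/-- `δ_y` mapping cell-centered functions to y-face functions. -/
noncomputable def dyc (hy : ℝ) (ω : GridFn Nx Ny) : GridFn Nx Ny :=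
  fun p => (ω (p.1, p.2 + 1) - ω p) / hy

/-- `δ_y` mapping y-face functions to cell-centered functions. -/
noncomputable def dyf (hy : ℝ) (ν : GridFn Nx Ny) : GridFn Nx Ny :=
  fun p => (ν p - ν (p.1, p.2 - 1)) / hy

/-- Second difference `δ_x²`. -/
noncomputable def dxx (hx : ℝ) (ω : GridFn Nx Ny) : GridFn Nx Ny :=
  fun p => (ω (p.1 + 1, p.2) - 2 * ω p + ω (p.1 - 1, p.2)) / hx ^ 2

/-- Second difference `δ_y²`. -/
noncomputable def dyy (hy : ℝ) (ω : GridFn Nx Ny) : GridFn Nx Ny :=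
  fun p => (ω (p.1, p.2 + 1) - 2 * ω p + ω (p.1, p.2 - 1)) / hy ^ 2

/-- Compact operator `L_x = Id + (hx²/24)·δ_x²`. -/
noncomputable def opLx (hx : ℝ) (ω : GridFn Nx Ny) : GridFn Nx Ny :=
  fun p => ω p + hx ^ 2 / 24 * dxx hx ω p

/-- Compact operator `L_y = Id + (hy²/24)·δ_y²`. -/
noncomputable def opLy (hy : ℝ) (ω : GridFn Nx Ny) : GridFn Nx Ny :=
  fun p => ω p + hy ^ 2 / 24 * dyy hy ω p

/-- Compact operator `ℒ = L_x ∘ L_y`. -/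
noncomputable def opLL (hx hy : ℝ) (ω : GridFn Nx Ny) : GridFn Nx Ny :=
  opLx hx (opLy hy ω)

/-- Cubic interpolation operator `T_x` (cell-centered to x-face). -/
noncomputable def Tx (ω : GridFn Nx Ny) : GridFn Nx Ny :=
  fun p => (-ω (p.1 - 1, p.2) + 9 * ω p + 9 * ω (p.1 + 1, p.2) - ω (p.1 + 2, p.2)) / 16

/-- Cubic interpolation operator `T_y` (cell-centered to y-face). -/
noncomputable def Ty (ω : GridFn Nx Ny) : GridFn Nx Ny :=
  fun p => (-ω (p.1, p.2 - 1) + 9 * ω p + 9 * ω (p.1, p.2 + 1) - ω (p.1, p.2 + 2)) / 16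

lemma shift_sum_x [NeZero Nx] [NeZero Ny] (f : GridFn Nx Ny) :
    ∑ p : ZMod Nx × ZMod Ny, f (p.1 + 1, p.2) = ∑ p : ZMod Nx × ZMod Ny, f p := by
  exact Fintype.sum_equiv ((Equiv.addRight (1 : ZMod Nx)).prodCongr (Equiv.refl _)) _ _
    (fun p => rfl)

lemma shift_sum_y [NeZero Nx] [NeZero Ny] (f : GridFn Nx Ny) :
    ∑ p : ZMod Nx × ZMod Ny, f (p.1, p.2 + 1) = ∑ p : ZMod Nx × ZMod Ny, f p := by
  exact Fintype.sum_equiv ((Equiv.refl _).prodCongr (Equiv.addRight (1 : ZMod Ny))) _ _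
    (fun p => rfl)

lemma sbp_x [NeZero Nx] [NeZero Ny] (hx : ℝ) (ν ω : GridFn Nx Ny) :
    ∑ p : ZMod Nx × ZMod Ny, dxf hx ν p * ω p
      = - ∑ p : ZMod Nx × ZMod Ny, ν p * dxc hx ω p := by
  have h := shift_sum_x (fun p => ν (p.1 - 1, p.2) * ω p / hx)
  simp only [add_sub_cancel_right] at h
  have e1 : ∑ p : ZMod Nx × ZMod Ny, dxf hx ν p * ω p
      = (∑ p : ZMod Nx × ZMod Ny, ν p * ω p / hx)
        - ∑ p : ZMod Nx × ZMod Ny, ν (p.1 - 1, p.2) * ω p / hx := by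
    rw [← Finset.sum_sub_distrib]
    exact Finset.sum_congr rfl fun p _ => by simp only [dxf]; ring
  have e2 : ∑ p : ZMod Nx × ZMod Ny, ν p * dxc hx ω p
      = (∑ p : ZMod Nx × ZMod Ny, ν p * ω (p.1 + 1, p.2) / hx)
        - ∑ p : ZMod Nx × ZMod Ny, ν p * ω p / hx := by
    rw [← Finset.sum_sub_distrib]
    exact Finset.sum_congr rfl fun p _ => by simp only [dxc]; ring
  rw [e1, e2, ← h]
  ring

lemma sbp_y [NeZero Nx] [NeZero Ny] (hy : ℝ) (ν ω : GridFn Nx Ny) :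
    ∑ p : ZMod Nx × ZMod Ny, dyf hy ν p * ω p
      = - ∑ p : ZMod Nx × ZMod Ny, ν p * dyc hy ω p := by
  have h := shift_sum_y (fun p => ν (p.1, p.2 - 1) * ω p / hy)
  simp only [add_sub_cancel_right] at h
  have e1 : ∑ p : ZMod Nx × ZMod Ny, dyf hy ν p * ω p
      = (∑ p : ZMod Nx × ZMod Ny, ν p * ω p / hy)
        - ∑ p : ZMod Nx × ZMod Ny, ν (p.1, p.2 - 1) * ω p / hy := by
    rw [← Finset.sum_sub_distrib]
    exact Finset.sum_congr rfl fun p _ => by simp only [dyf]; ring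
  have e2 : ∑ p : ZMod Nx × ZMod Ny, ν p * dyc hy ω p
      = (∑ p : ZMod Nx × ZMod Ny, ν p * ω (p.1, p.2 + 1) / hy)
        - ∑ p : ZMod Nx × ZMod Ny, ν p * ω p / hy := by
    rw [← Finset.sum_sub_distrib]
    exact Finset.sum_congr rfl fun p _ => by simp only [dyc]; ring
  rw [e1, e2, ← h]
  ring

lemma opLy_dxf_comm [NeZero Nx] [NeZero Ny] (hx hy : ℝ) (ν : GridFn Nx Ny) :
    opLy hy (dxf hx ν) = dxf hx (opLy hy ν) := by
  funext p
  simp only [opLy, dxf, dyy]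
  ring

lemma opLx_dyf_comm [NeZero Nx] [NeZero Ny] (hx hy : ℝ) (ν : GridFn Nx Ny) :
    opLx hx (dyf hy ν) = dyf hy (opLx hx ν) := by
  funext p
  simp only [opLx, dyf, dxx]
  ring

/-- **Lemma 2.2 (summation by parts).**  For every cell-centered grid function
`ω`, every x-face grid function `νˣ` and every y-face grid function `νʸ`,
`(L_y δ_x νˣ, ω) = −(L_y νˣ, δ_x ω)` and `(L_x δ_y νʸ, ω) = −(L_x νʸ, δ_y ω)`. -/
theorem summation_by_parts [NeZero Nx] [NeZero Ny]
    (hx hy : ℝ) (hhx : 0 < hx) (hhy : 0 < hy)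
    (ω νx νy : GridFn Nx Ny) :
    gip hx hy (opLy hy (dxf hx νx)) ω = - gip hx hy (opLy hy νx) (dxc hx ω) ∧
    gip hx hy (opLx hx (dyf hy νy)) ω = - gip hx hy (opLx hx νy) (dyc hy ω) := by
  constructor
  · rw [opLy_dxf_comm]
    simp only [gip]
    have : ∀ (f g : GridFn Nx Ny), ∑ p : ZMod Nx × ZMod Ny, hx * hy * f p * g p
        = hx * hy * ∑ p : ZMod Nx × ZMod Ny, f p * g p := by
      intro f g; rw [Finset.mul_sum]; exact Finset.sum_congr rfl fun p _ => by ring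
    rw [this, this, sbp_x hx (opLy hy νx) ω]
    ring
  · rw [opLx_dyf_comm]
    simp only [gip]
    have : ∀ (f g : GridFn Nx Ny), ∑ p : ZMod Nx × ZMod Ny, hx * hy * f p * g p
        = hx * hy * ∑ p : ZMod Nx × ZMod Ny, f p * g p := by
      intro f g; rw [Finset.mul_sum]; exact Finset.sum_congr rfl fun p _ => by ring
    rw [this, this, sbp_y hy (opLx hx νy) ω]
    ring
end

section
/- Let ω be a cell-centered grid function, νˣ an x-face grid function, and νʸ a y-face grid function. If μ is a cell-centered grid function with L_x μ = δ_x νˣ and σ is an x-face grid function with L_x σ = δ_x ω, then (μ, ω) = −(νˣ, σ). Likewise, if μ' is a cell-centered grid function with L_y μ' = δ_y νʸ and σ' is a y-face grid function with L_y σ' = δ_y ω, then (μ', ω) = −(νʸ, σ'). (These are the identities (L_x⁻¹ δ_x νˣ, ω) = −(νˣ, L_x⁻¹ δ_x ω) and (L_y⁻¹ δ_y νʸ, ω) = −(νʸ, L_y⁻¹ δ_y ω) of Lemma 2.2.) -/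
open Finset

variable {Nx Ny : ℕ}

/-! ### Auxiliary generic shift-operator framework -/

/-- Generic forward difference with shift `e`. -/
noncomputable def Dcg (h : ℝ) (e : ZMod Nx × ZMod Ny) (f : GridFn Nx Ny) : GridFn Nx Ny :=
  fun p => (f (p + e) - f p) / h

/-- Generic backward difference with shift `e`. -/
noncomputable def Dfg (h : ℝ) (e : ZMod Nx × ZMod Ny) (f : GridFn Nx Ny) : GridFn Nx Ny :=
  fun p => (f p - f (p - e)) / h

/-- Generic compact operator. -/
noncomputable def Lg (e : ZMod Nx × ZMod Ny) (f : GridFn Nx Ny) : GridFn Nx Ny :=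
  fun p => f p + (f (p + e) - 2 * f p + f (p - e)) / 24

lemma sum_shift [NeZero Nx] [NeZero Ny] (f : GridFn Nx Ny) (a : ZMod Nx × ZMod Ny) :
    ∑ p : ZMod Nx × ZMod Ny, f (p + a) = ∑ p : ZMod Nx × ZMod Ny, f p :=
  Fintype.sum_equiv (Equiv.addRight a) _ _ (fun p => rfl)

lemma px1 (p : ZMod Nx × ZMod Ny) : p + ((1 : ZMod Nx), (0 : ZMod Ny)) = (p.1 + 1, p.2) := by
  cases p; simp [Prod.ext_iff]

lemma mx1 (p : ZMod Nx × ZMod Ny) : p - ((1 : ZMod Nx), (0 : ZMod Ny)) = (p.1 - 1, p.2) := by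
  cases p; simp [Prod.ext_iff]

lemma py1 (p : ZMod Nx × ZMod Ny) : p + ((0 : ZMod Nx), (1 : ZMod Ny)) = (p.1, p.2 + 1) := by
  cases p; simp [Prod.ext_iff]

lemma my1 (p : ZMod Nx × ZMod Ny) : p - ((0 : ZMod Nx), (1 : ZMod Ny)) = (p.1, p.2 - 1) := by
  cases p; simp [Prod.ext_iff]

lemma dxc_eq (hx : ℝ) (f : GridFn Nx Ny) : dxc hx f = Dcg hx (1, 0) f :=
  funext fun p => by rw [Dcg, px1]; rfl

lemma dxf_eq (hx : ℝ) (f : GridFn Nx Ny) : dxf hx f = Dfg hx (1, 0) f :=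
  funext fun p => by rw [Dfg, mx1]; rfl

lemma dyc_eq (hy : ℝ) (f : GridFn Nx Ny) : dyc hy f = Dcg hy (0, 1) f :=
  funext fun p => by rw [Dcg, py1]; rfl

lemma dyf_eq (hy : ℝ) (f : GridFn Nx Ny) : dyf hy f = Dfg hy (0, 1) f :=
  funext fun p => by rw [Dfg, my1]; rfl

lemma opLx_eq {hx : ℝ} (hhx : hx ≠ 0) (f : GridFn Nx Ny) : opLx hx f = Lg (1, 0) f :=
  funext fun p => by
    rw [Lg, px1, mx1, opLx, dxx]
    field_simp

lemma opLy_eq {hy : ℝ} (hhy : hy ≠ 0) (f : GridFn Nx Ny) : opLy hy f = Lg (0, 1) f :=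
  funext fun p => by
    rw [Lg, py1, my1, opLy, dyy]
    field_simp

/-- Adjoint relation between the two difference operators. -/
lemma gip_adj [NeZero Nx] [NeZero Ny] (hx hy h : ℝ) (e : ZMod Nx × ZMod Ny)
    (a b : GridFn Nx Ny) :
    gip hx hy (Dfg h e a) b = - gip hx hy a (Dcg h e b) := by
  have key : gip hx hy (Dfg h e a) b + gip hx hy a (Dcg h e b) = 0 := by
    unfold gip Dfg Dcg
    rw [← Finset.sum_add_distrib]
    have h1 : ∀ p : ZMod Nx × ZMod Ny,
        hx * hy * ((a p - a (p - e)) / h) * b p + hx * hy * a p * ((b (p + e) - b p) / h)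
          = (fun q => hx * hy * a q * b (q + e) / h) p
            - (fun q => hx * hy * a q * b (q + e) / h) (p + -e) := by
      intro p
      simp only [neg_add_cancel_right, sub_eq_add_neg]
      ring
    rw [Finset.sum_congr rfl (fun p _ => h1 p), Finset.sum_sub_distrib,
      sum_shift (fun q => hx * hy * a q * b (q + e) / h) (-e)]
    simp
  linarith

/-- Self-adjointness of the compact operator. -/
lemma gip_selfadj [NeZero Nx] [NeZero Ny] (hx hy : ℝ) (e : ZMod Nx × ZMod Ny)
    (f g : GridFn Nx Ny) :
    gip hx hy (Lg e f) g = gip hx hy f (Lg e g) := by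
  have key : gip hx hy (Lg e f) g - gip hx hy f (Lg e g) = 0 := by
    unfold gip Lg
    rw [← Finset.sum_sub_distrib]
    have h1 : ∀ p : ZMod Nx × ZMod Ny,
        hx * hy * (f p + (f (p + e) - 2 * f p + f (p - e)) / 24) * g p
          - hx * hy * f p * (g p + (g (p + e) - 2 * g p + g (p - e)) / 24)
        = ((fun q => hx * hy / 24 * f (q + e) * g q) p
            - (fun q => hx * hy / 24 * f (q + e) * g q) (p + -e))
          + ((fun q => hx * hy / 24 * f (q - e) * g q) p
            - (fun q => hx * hy / 24 * f (q - e) * g q) (p + e)) := by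
      intro p
      simp only [neg_add_cancel_right, add_sub_cancel_right, sub_eq_add_neg]
      ring
    rw [Finset.sum_congr rfl (fun p _ => h1 p), Finset.sum_add_distrib,
      Finset.sum_sub_distrib, Finset.sum_sub_distrib,
      sum_shift (fun q => hx * hy / 24 * f (q + e) * g q) (-e),
      sum_shift (fun q => hx * hy / 24 * f (q - e) * g q) e]
    simp
  linarith

/-- The compact operator commutes with the forward difference. -/
lemma Lg_Dcg_comm (h : ℝ) (e : ZMod Nx × ZMod Ny) (f : GridFn Nx Ny) :
    Lg e (Dcg h e f) = Dcg h e (Lg e f) :=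
  funext fun p => by
    simp only [Lg, Dcg, sub_add_cancel, add_sub_cancel_right]
    ring

/-- The compact operator is injective (diagonal dominance / maximum principle). -/
lemma Lg_inj [NeZero Nx] [NeZero Ny] (e : ZMod Nx × ZMod Ny) :
    Function.Injective (Lg (Nx := Nx) (Ny := Ny) e) := by
  have ker : ∀ ψ : GridFn Nx Ny, Lg e ψ = 0 → ψ = 0 := by
    intro ψ hψ
    obtain ⟨p₀, -, hmax⟩ :=
      Finset.exists_max_image (Finset.univ : Finset (ZMod Nx × ZMod Ny))
        (fun p => |ψ p|) Finset.univ_nonempty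
    have h0 : ∀ p, ψ p + (ψ (p + e) - 2 * ψ p + ψ (p - e)) / 24 = 0 := by
      intro p
      have := congrFun hψ p
      simpa [Lg] using this
    have e1 : 22 * ψ p₀ = -(ψ (p₀ + e) + ψ (p₀ - e)) := by
      linear_combination 24 * h0 p₀
    have habs : 22 * |ψ p₀| ≤ 2 * |ψ p₀| := by
      have h2 : |22 * ψ p₀| = |ψ (p₀ + e) + ψ (p₀ - e)| := by rw [e1, abs_neg]
      have h3 : |ψ (p₀ + e) + ψ (p₀ - e)| ≤ |ψ (p₀ + e)| + |ψ (p₀ - e)| := abs_add_le _ _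
      have h4 : |ψ (p₀ + e)| ≤ |ψ p₀| := hmax _ (Finset.mem_univ _)
      have h5 : |ψ (p₀ - e)| ≤ |ψ p₀| := hmax _ (Finset.mem_univ _)
      have h6 : |22 * ψ p₀| = 22 * |ψ p₀| := by
        rw [abs_mul]; norm_num
      linarith
    have hz : |ψ p₀| = 0 := le_antisymm (by linarith) (abs_nonneg _)
    funext q
    have := hmax q (Finset.mem_univ q)
    have : |ψ q| ≤ 0 := by rw [hz] at this; exact this
    simpa using abs_eq_zero.mp (le_antisymm this (abs_nonneg _))
  intro f g hfg
  have : Lg e (f - g) = 0 := by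
    funext p
    have := congrFun hfg p
    simp only [Lg, Pi.sub_apply, Pi.zero_apply] at this ⊢
    linarith
  have := ker _ this
  exact sub_eq_zero.mp this

/-- `Lg e` as a linear map. -/
noncomputable def LgLin (e : ZMod Nx × ZMod Ny) : GridFn Nx Ny →ₗ[ℝ] GridFn Nx Ny where
  toFun := Lg e
  map_add' f g := funext fun p => by simp only [Lg, Pi.add_apply]; ring
  map_smul' c f := funext fun p => by
    simp only [Lg, Pi.smul_apply, smul_eq_mul, RingHom.id_apply]; ring

/-- The compact operator is surjective. -/
lemma Lg_surj [NeZero Nx] [NeZero Ny] (e : ZMod Nx × ZMod Ny) :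
    Function.Surjective (Lg (Nx := Nx) (Ny := Ny) e) := by
  have hinj : Function.Injective (LgLin (Nx := Nx) (Ny := Ny) e) := Lg_inj e
  exact LinearMap.injective_iff_surjective.mp hinj

/-- One direction of the summation-by-parts identity, in generic form. -/
lemma sbp_generic [NeZero Nx] [NeZero Ny] (hx hy h : ℝ) (e : ZMod Nx × ZMod Ny)
    (ω ν μ σ : GridFn Nx Ny)
    (hμ : Lg e μ = Dfg h e ν) (hσ : Lg e σ = Dcg h e ω) :
    gip hx hy μ ω = - gip hx hy ν σ := by
  obtain ⟨τ, hτ⟩ := Lg_surj e ω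
  have hστ : σ = Dcg h e τ := by
    apply Lg_inj e
    rw [hσ, ← hτ, Lg_Dcg_comm]
  calc gip hx hy μ ω = gip hx hy μ (Lg e τ) := by rw [hτ]
    _ = gip hx hy (Lg e μ) τ := (gip_selfadj hx hy e μ τ).symm
    _ = gip hx hy (Dfg h e ν) τ := by rw [hμ]
    _ = - gip hx hy ν (Dcg h e τ) := gip_adj hx hy h e ν τ
    _ = - gip hx hy ν σ := by rw [hστ]

/-- **Lemma 2.2, second pair of identities.**  If `L_x μ = δ_x νˣ` and
`L_x σ = δ_x ω`, then `(μ, ω) = −(νˣ, σ)`, i.e.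
`(L_x⁻¹ δ_x νˣ, ω) = −(νˣ, L_x⁻¹ δ_x ω)`; and likewise in the y-direction. -/
theorem summation_by_parts_inv [NeZero Nx] [NeZero Ny]
    (hx hy : ℝ) (hhx : 0 < hx) (hhy : 0 < hy)
    (ω νx νy μ μ' σ σ' : GridFn Nx Ny)
    (hμ : opLx hx μ = dxf hx νx) (hσ : opLx hx σ = dxc hx ω)
    (hμ' : opLy hy μ' = dyf hy νy) (hσ' : opLy hy σ' = dyc hy ω) :
    gip hx hy μ ω = - gip hx hy νx σ ∧ gip hx hy μ' ω = - gip hx hy νy σ' := by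
  have hx0 : hx ≠ 0 := ne_of_gt hhx
  have hy0 : hy ≠ 0 := ne_of_gt hhy
  rw [opLx_eq hx0, dxf_eq] at hμ
  rw [opLx_eq hx0, dxc_eq] at hσ
  rw [opLy_eq hy0, dyf_eq] at hμ'
  rw [opLy_eq hy0, dyc_eq] at hσ'
  exact ⟨sbp_generic hx hy hx (1, 0) ω νx μ σ hμ hσ,
    sbp_generic hx hy hy (0, 1) ω νy μ' σ' hμ' hσ'⟩
end

section
/- Discrete mass conservation. Let Δt > 0, let φ be a cell-centered grid function, let C⁰, C¹, …, Cᴺ be cell-centered grid functions, let W^{x,0}, …, W^{x,N} be x-face grid functions, W^{y,0}, …, W^{y,N} y-face grid functions, and let q_P^{ℓ+1/2} and g^{ℓ+1/2} be cell-centered grid functions for 0 ≤ ℓ ≤ N−1. Assume that for every 0 ≤ ℓ ≤ N−1 the scheme equation holds pointwise on the grid: ℒ[φ·(C^{ℓ+1} − C^ℓ)/Δt] + L_y δ_x[(W^{x,ℓ+1} + W^{x,ℓ})/2] + L_x δ_y[(W^{y,ℓ+1} + W^{y,ℓ})/2] − ℒ[q_P^{ℓ+1/2}·(C^{ℓ+1}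 + C^ℓ)/2] = ℒ[g^{ℓ+1/2}]. Then for every 1 ≤ n ≤ N, (ℒ[φ·Cⁿ], 1) = (ℒ[φ·C⁰], 1) + Δt · ∑_{ℓ=0}^{n−1} (ℒ[g^{ℓ+1/2} + q_P^{ℓ+1/2}·(C^{ℓ+1} + C^ℓ)/2], 1), where 1 denotes the constant grid function with value 1. -/
open Finset

variable {Nx Ny : ℕ}

section Aux
variable [NeZero Nx] [NeZero Ny]

lemma sum_shift_x (a : ZMod Nx) (f : GridFn Nx Ny) :
    ∑ p : ZMod Nx × ZMod Ny, f (p.1 + a, p.2) = ∑ p : ZMod Nx × ZMod Ny, f p :=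
  Fintype.sum_equiv ((Equiv.addRight a).prodCongr (Equiv.refl _)) _ _ (fun _ => rfl)

lemma sum_shift_y (a : ZMod Ny) (f : GridFn Nx Ny) :
    ∑ p : ZMod Nx × ZMod Ny, f (p.1, p.2 + a) = ∑ p : ZMod Nx × ZMod Ny, f p :=
  Fintype.sum_equiv ((Equiv.refl _).prodCongr (Equiv.addRight a)) _ _ (fun _ => rfl)

lemma sum_dxx (hx : ℝ) (f : GridFn Nx Ny) :
    ∑ p : ZMod Nx × ZMod Ny, dxx hx f p = 0 := by
  have h1 := sum_shift_x (Ny := Ny) 1 (fun p => f p / hx ^ 2)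
  have h2 := sum_shift_x (Ny := Ny) (-1) (fun p => f p / hx ^ 2)
  have h3 : ∑ p : ZMod Nx × ZMod Ny, 2 * f p / hx ^ 2
      = 2 * ∑ p : ZMod Nx × ZMod Ny, f p / hx ^ 2 := by
    rw [Finset.mul_sum]; exact Finset.sum_congr rfl fun p _ => by ring
  simp only [dxx, sub_eq_add_neg, add_div, neg_div, Finset.sum_add_distrib,
    Finset.sum_neg_distrib]
  linarith

lemma sum_dyy (hy : ℝ) (f : GridFn Nx Ny) :
    ∑ p : ZMod Nx × ZMod Ny, dyy hy f p = 0 := by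
  have h1 := sum_shift_y (Nx := Nx) 1 (fun p => f p / hy ^ 2)
  have h2 := sum_shift_y (Nx := Nx) (-1) (fun p => f p / hy ^ 2)
  have h3 : ∑ p : ZMod Nx × ZMod Ny, 2 * f p / hy ^ 2
      = 2 * ∑ p : ZMod Nx × ZMod Ny, f p / hy ^ 2 := by
    rw [Finset.mul_sum]; exact Finset.sum_congr rfl fun p _ => by ring
  simp only [dyy, sub_eq_add_neg, add_div, neg_div, Finset.sum_add_distrib,
    Finset.sum_neg_distrib]
  linarith

lemma sum_dxf (hx : ℝ) (f : GridFn Nx Ny) :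
    ∑ p : ZMod Nx × ZMod Ny, dxf hx f p = 0 := by
  have h1 := sum_shift_x (Ny := Ny) (-1) (fun p => f p / hx)
  simp only [dxf, sub_eq_add_neg, add_div, neg_div, Finset.sum_add_distrib,
    Finset.sum_neg_distrib]
  linarith

lemma sum_dyf (hy : ℝ) (f : GridFn Nx Ny) :
    ∑ p : ZMod Nx × ZMod Ny, dyf hy f p = 0 := by
  have h1 := sum_shift_y (Nx := Nx) (-1) (fun p => f p / hy)
  simp only [dyf, sub_eq_add_neg, add_div, neg_div, Finset.sum_add_distrib,
    Finset.sum_neg_distrib]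
  linarith

lemma sum_opLx (hx : ℝ) (f : GridFn Nx Ny) :
    ∑ p : ZMod Nx × ZMod Ny, opLx hx f p = ∑ p : ZMod Nx × ZMod Ny, f p := by
  simp only [opLx]
  rw [Finset.sum_add_distrib, ← Finset.mul_sum, sum_dxx, mul_zero, add_zero]

lemma sum_opLy (hy : ℝ) (f : GridFn Nx Ny) :
    ∑ p : ZMod Nx × ZMod Ny, opLy hy f p = ∑ p : ZMod Nx × ZMod Ny, f p := by
  simp only [opLy]
  rw [Finset.sum_add_distrib, ← Finset.mul_sum, sum_dyy, mul_zero, add_zero]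

lemma sum_opLL (hx hy : ℝ) (f : GridFn Nx Ny) :
    ∑ p : ZMod Nx × ZMod Ny, opLL hx hy f p = ∑ p : ZMod Nx × ZMod Ny, f p := by
  rw [opLL, sum_opLx, sum_opLy]

lemma gip_one (hx hy : ℝ) (f : GridFn Nx Ny) :
    gip hx hy (opLL hx hy f) (fun _ => 1)
      = hx * hy * ∑ p : ZMod Nx × ZMod Ny, f p := by
  unfold gip
  rw [← sum_opLL hx hy f, Finset.mul_sum]
  exact Finset.sum_congr rfl fun p _ => by ring

end Aux

/-- **Discrete mass conservation (Theorem 2.1).**  If the Crank–Nicolson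
compact scheme
`ℒ[φ·(C^{ℓ+1} − C^ℓ)/Δt] + L_y δ_x W̄ˣ + L_x δ_y W̄ʸ − ℒ[q_P·C̄] = ℒ[g]`
holds pointwise for `0 ≤ ℓ ≤ N−1`, then the discrete mass
`(ℒ[φ Cⁿ], 1)` equals the initial mass plus the accumulated sources. -/
theorem discrete_mass_conservation [NeZero Nx] [NeZero Ny]
    (hx hy : ℝ) (hhx : 0 < hx) (hhy : 0 < hy)
    (Δt : ℝ) (hΔt : 0 < Δt) (N : ℕ)
    (φ : GridFn Nx Ny) (C Wx Wy qP g : ℕ → GridFn Nx Ny)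
    (hscheme : ∀ ℓ < N, ∀ p : ZMod Nx × ZMod Ny,
      opLL hx hy (fun q => φ q * (C (ℓ + 1) q - C ℓ q) / Δt) p
        + opLy hy (dxf hx (fun q => (Wx (ℓ + 1) q + Wx ℓ q) / 2)) p
        + opLx hx (dyf hy (fun q => (Wy (ℓ + 1) q + Wy ℓ q) / 2)) p
        - opLL hx hy (fun q => qP ℓ q * (C (ℓ + 1) q + C ℓ q) / 2) p
      = opLL hx hy (g ℓ) p) :
    ∀ n, 1 ≤ n → n ≤ N →
      gip hx hy (opLL hx hy (fun q => φ q * C n q)) (fun _ => 1)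
        = gip hx hy (opLL hx hy (fun q => φ q * C 0 q)) (fun _ => 1)
          + Δt * ∑ ℓ ∈ Finset.range n,
              gip hx hy
                (opLL hx hy (fun q => g ℓ q + qP ℓ q * (C (ℓ + 1) q + C ℓ q) / 2))
                (fun _ => 1) := by
  have step : ∀ ℓ < N,
      ∑ p : ZMod Nx × ZMod Ny, φ p * C (ℓ + 1) p
        = ∑ p : ZMod Nx × ZMod Ny, φ p * C ℓ p
          + Δt * ∑ p : ZMod Nx × ZMod Ny,
              (g ℓ p + qP ℓ p * (C (ℓ + 1) p + C ℓ p) / 2) := by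
    intro ℓ hℓ
    have hsum : ∑ p : ZMod Nx × ZMod Ny,
        (opLL hx hy (fun q => φ q * (C (ℓ + 1) q - C ℓ q) / Δt) p
          + opLy hy (dxf hx (fun q => (Wx (ℓ + 1) q + Wx ℓ q) / 2)) p
          + opLx hx (dyf hy (fun q => (Wy (ℓ + 1) q + Wy ℓ q) / 2)) p
          - opLL hx hy (fun q => qP ℓ q * (C (ℓ + 1) q + C ℓ q) / 2) p)
        = ∑ p : ZMod Nx × ZMod Ny, opLL hx hy (g ℓ) p :=
      Finset.sum_congr rfl fun p _ => hscheme ℓ hℓ p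
    rw [Finset.sum_sub_distrib, Finset.sum_add_distrib, Finset.sum_add_distrib,
      sum_opLL, sum_opLL, sum_opLL, sum_opLy, sum_opLx, sum_dxf, sum_dyf] at hsum
    have e1 : ∑ p : ZMod Nx × ZMod Ny, φ p * (C (ℓ + 1) p - C ℓ p) / Δt
        = (∑ p : ZMod Nx × ZMod Ny, φ p * C (ℓ + 1) p) / Δt
          - (∑ p : ZMod Nx × ZMod Ny, φ p * C ℓ p) / Δt := by
      rw [← Finset.sum_div, div_sub_div_same, ← Finset.sum_sub_distrib]
      congr 1
      exact Finset.sum_congr rfl fun p _ => by ring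
    rw [e1] at hsum
    rw [Finset.sum_add_distrib]
    have hΔt' : Δt ≠ 0 := ne_of_gt hΔt
    field_simp at hsum
    linarith
  have main : ∀ n, n ≤ N →
      gip hx hy (opLL hx hy (fun q => φ q * C n q)) (fun _ => 1)
        = gip hx hy (opLL hx hy (fun q => φ q * C 0 q)) (fun _ => 1)
          + Δt * ∑ ℓ ∈ Finset.range n,
              gip hx hy
                (opLL hx hy (fun q => g ℓ q + qP ℓ q * (C (ℓ + 1) q + C ℓ q) / 2))
                (fun _ => 1) := by
    intro n
    induction n with
    | zero => intro _; simp
    | succ k ih =>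
      intro hk1
      have hkN : k < N := hk1
      have ihk := ih (Nat.le_of_lt hkN)
      simp only [gip_one] at ihk ⊢
      rw [Finset.sum_range_succ]
      have hs := step k hkN
      calc hx * hy * ∑ p : ZMod Nx × ZMod Ny, φ p * C (k + 1) p
          = hx * hy * (∑ p : ZMod Nx × ZMod Ny, φ p * C k p
              + Δt * ∑ p : ZMod Nx × ZMod Ny,
                  (g k p + qP k p * (C (k + 1) p + C k p) / 2)) := by rw [hs]
        _ = hx * hy * ∑ p : ZMod Nx × ZMod Ny, φ p * C k p
              + Δt * (hx * hy * ∑ p : ZMod Nx × ZMod Ny,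
                  (g k p + qP k p * (C (k + 1) p + C k p) / 2)) := by ring
        _ = _ := by rw [ihk]; ring
  intro n _ hn
  exact main n hn
end

section
/- For every grid function ν : ZMod Nx × ZMod Ny → ℝ, (11/16)·‖ν‖ ≤ ‖L_x ν‖ ≤ ‖ν‖ and (11/16)·‖ν‖ ≤ ‖L_y ν‖ ≤ ‖ν‖; consequently the linear maps L_x and L_y on the space of grid functions are bijective. -/
open Finset

variable {Nx Ny : ℕ}

/-
Since `hx² · δ_x² = S + S⁻¹ - 2` for the periodic shift `S` in the `x`-direction,
`L_x = (11/12) Id + (1/24) (S + S⁻¹)`. The shift permutes grid points, so it is an isometry of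
the discrete `L²` norm, and the triangle inequality gives
`(11/12 - 2/24) ‖ν‖ ≤ ‖L_x ν‖ ≤ (11/12 + 2/24) ‖ν‖`, i.e. `5/6 ‖ν‖ ≤ ‖L_x ν‖ ≤ ‖ν‖`, with
`11/16 < 5/6`. The lower bound makes `L_x` injective, hence bijective on the finite-dimensional
space of grid functions. The same holds for `L_y`.
-/

section Norm
variable {E : Type*} [SeminormedAddCommGroup E] [NormedSpace ℝ E]

lemma norm_smul_add_smul_add_le (a b : ℝ) {u v w : E} (hu : ‖u‖ ≤ ‖v‖) (hw : ‖w‖ ≤ ‖v‖) :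
    ‖a • v + b • (u + w)‖ ≤ (|a| + 2 * |b|) * ‖v‖ := by
  have huw : ‖u + w‖ ≤ 2 * ‖v‖ := by linarith [norm_add_le u w]
  calc ‖a • v + b • (u + w)‖ ≤ |a| * ‖v‖ + |b| * ‖u + w‖ := by
        simpa only [norm_smul, Real.norm_eq_abs] using norm_add_le (a • v) (b • (u + w))
    _ ≤ (|a| + 2 * |b|) * ‖v‖ := by nlinarith [abs_nonneg b]

lemma le_norm_smul_add_smul_add (a b : ℝ) {u v w : E} (hu : ‖u‖ ≤ ‖v‖) (hw : ‖w‖ ≤ ‖v‖) :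
    (|a| - 2 * |b|) * ‖v‖ ≤ ‖a • v + b • (u + w)‖ := by
  have huw : ‖u + w‖ ≤ 2 * ‖v‖ := by linarith [norm_add_le u w]
  have h := norm_sub_le (a • v + b • (u + w)) (b • (u + w))
  simp only [add_sub_cancel_right, norm_smul, Real.norm_eq_abs] at h
  nlinarith [abs_nonneg b]

end Norm

section ThreePointStencil

variable {ι : Type*}

def threePointStencil (a b : ℝ) (e : ι ≃ ι) : (ι → ℝ) →ₗ[ℝ] ι → ℝ :=
  a • LinearMap.id + b • (LinearMap.funLeft ℝ ℝ e + LinearMap.funLeft ℝ ℝ e.symm)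

lemma threePointStencil_apply (a b : ℝ) (e : ι ≃ ι) (ν : ι → ℝ) (i : ι) :
    threePointStencil a b e ν i = a * ν i + b * (ν (e i) + ν (e.symm i)) :=
  rfl

lemma toLp_threePointStencil (a b : ℝ) (e : ι ≃ ι) (ν : ι → ℝ) :
    WithLp.toLp 2 (threePointStencil a b e ν) =
      a • WithLp.toLp 2 ν + b • (WithLp.toLp 2 (ν ∘ e) + WithLp.toLp 2 (ν ∘ e.symm)) :=
  rfl

variable [Fintype ι]

lemma norm_toLp_comp_equiv (f : ι → ℝ) (e : ι ≃ ι) :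
    ‖WithLp.toLp 2 (f ∘ e)‖ = ‖WithLp.toLp 2 f‖ := by
  simp only [EuclideanSpace.norm_eq, Function.comp_apply]
  rw [Equiv.sum_comp e (fun i => ‖f i‖ ^ 2)]

lemma norm_toLp_threePointStencil_le (a b : ℝ) (e : ι ≃ ι) (ν : ι → ℝ) :
    ‖WithLp.toLp 2 (threePointStencil a b e ν)‖ ≤ (|a| + 2 * |b|) * ‖WithLp.toLp 2 ν‖ := by
  rw [toLp_threePointStencil]
  exact norm_smul_add_smul_add_le a b (norm_toLp_comp_equiv ν e).le
    (norm_toLp_comp_equiv ν e.symm).le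

lemma le_norm_toLp_threePointStencil (a b : ℝ) (e : ι ≃ ι) (ν : ι → ℝ) :
    (|a| - 2 * |b|) * ‖WithLp.toLp 2 ν‖ ≤ ‖WithLp.toLp 2 (threePointStencil a b e ν)‖ := by
  rw [toLp_threePointStencil]
  exact le_norm_smul_add_smul_add a b (norm_toLp_comp_equiv ν e).le
    (norm_toLp_comp_equiv ν e.symm).le

lemma threePointStencil_bijective {a b : ℝ} (hab : 2 * |b| < |a|) (e : ι ≃ ι) :
    Function.Bijective (threePointStencil a b e) := by
  have hinj : Function.Injective (threePointStencil a b e) := by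
    rw [injective_iff_map_eq_zero]
    intro ν hν
    have h := le_norm_toLp_threePointStencil a b e ν
    rw [hν, WithLp.toLp_zero, norm_zero] at h
    have hν0 : ‖WithLp.toLp 2 ν‖ = 0 :=
      le_antisymm (nonpos_of_mul_nonpos_right h (by linarith)) (norm_nonneg _)
    simpa using hν0
  exact ⟨hinj, LinearMap.injective_iff_surjective.mp hinj⟩

end ThreePointStencil

lemma gnorm_eq_sqrt_mul_norm [NeZero Nx] [NeZero Ny] {hx hy : ℝ} (h : 0 ≤ hx * hy)
    (ω : GridFn Nx Ny) : gnorm hx hy ω = √(hx * hy) * ‖WithLp.toLp 2 ω‖ := by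
  rw [gnorm, gip, EuclideanSpace.norm_eq, ← Real.sqrt_mul h, Finset.mul_sum]
  congr 1
  refine Finset.sum_congr rfl fun p _ => ?_
  rw [Real.norm_eq_abs, sq_abs, PiLp.toLp_apply]
  ring

lemma opLx_eq_threePointStencil {hx : ℝ} (hx0 : hx ≠ 0) :
    (opLx hx : GridFn Nx Ny → GridFn Nx Ny) =
      threePointStencil (11 / 12) (1 / 24) (Equiv.addRight (1, 0)) := by
  ext ν p
  simp only [opLx, dxx, threePointStencil_apply, Equiv.coe_addRight, Equiv.addRight_symm,
    Prod.add_def, Prod.neg_mk, neg_zero, add_zero, sub_eq_add_neg]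
  field_simp
  ring

lemma opLy_eq_threePointStencil {hy : ℝ} (hy0 : hy ≠ 0) :
    (opLy hy : GridFn Nx Ny → GridFn Nx Ny) =
      threePointStencil (11 / 12) (1 / 24) (Equiv.addRight (0, 1)) := by
  ext ν p
  simp only [opLy, dyy, threePointStencil_apply, Equiv.coe_addRight, Equiv.addRight_symm,
    Prod.add_def, Prod.neg_mk, neg_zero, add_zero, sub_eq_add_neg]
  field_simp
  ring

lemma gnorm_threePointStencil_bounds [NeZero Nx] [NeZero Ny] {hx hy : ℝ} (h : 0 ≤ hx * hy)
    (e : ZMod Nx × ZMod Ny ≃ ZMod Nx × ZMod Ny) (ν : GridFn Nx Ny) :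
    11 / 16 * gnorm hx hy ν ≤ gnorm hx hy (threePointStencil (11 / 12) (1 / 24) e ν) ∧
      gnorm hx hy (threePointStencil (11 / 12) (1 / 24) e ν) ≤ gnorm hx hy ν := by
  have hle := norm_toLp_threePointStencil_le (11 / 12) (1 / 24) e ν
  have hge := le_norm_toLp_threePointStencil (11 / 12) (1 / 24) e ν
  rw [abs_of_pos (by norm_num), abs_of_pos (by norm_num)] at hle hge
  simp only [gnorm_eq_sqrt_mul_norm h]
  have hs := Real.sqrt_nonneg (hx * hy)
  have hn := norm_nonneg (WithLp.toLp 2 ν)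
  constructor <;> nlinarith

/-- **Lemma 3.3 (bounds for the compact operators `L_x`, `L_y`).**
`(11/16)·‖ν‖ ≤ ‖L_x ν‖ ≤ ‖ν‖` and `(11/16)·‖ν‖ ≤ ‖L_y ν‖ ≤ ‖ν‖` for every grid
function `ν`; consequently `L_x` and `L_y` are bijective. -/
theorem compact_op_bounds [NeZero Nx] [NeZero Ny]
    (hx hy : ℝ) (hhx : 0 < hx) (hhy : 0 < hy) :
    (∀ ν : GridFn Nx Ny,
      11 / 16 * gnorm hx hy ν ≤ gnorm hx hy (opLx hx ν) ∧
      gnorm hx hy (opLx hx ν) ≤ gnorm hx hy ν ∧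
      11 / 16 * gnorm hx hy ν ≤ gnorm hx hy (opLy hy ν) ∧
      gnorm hx hy (opLy hy ν) ≤ gnorm hx hy ν) ∧
    Function.Bijective (opLx hx : GridFn Nx Ny → GridFn Nx Ny) ∧
    Function.Bijective (opLy hy : GridFn Nx Ny → GridFn Nx Ny) := by
  have hxy : 0 ≤ hx * hy := (mul_pos hhx hhy).le
  have hab : 2 * |(1 / 24 : ℝ)| < |11 / 12| := by norm_num [abs_of_pos]
  rw [opLx_eq_threePointStencil hhx.ne', opLy_eq_threePointStencil hhy.ne']
  refine ⟨fun ν => ?_, threePointStencil_bijective hab _, threePointStencil_bijective hab _⟩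
  obtain ⟨hx_lower, hx_upper⟩ := gnorm_threePointStencil_bounds hxy (Equiv.addRight (1, 0)) ν
  obtain ⟨hy_lower, hy_upper⟩ := gnorm_threePointStencil_bounds hxy (Equiv.addRight (0, 1)) ν
  exact ⟨hx_lower, hx_upper, hy_lower, hy_upper⟩
end

section
/- For every grid function ω : ZMod Nx × ZMod Ny → ℝ, (11/16)²·‖ω‖ ≤ ‖ℒ ω‖ ≤ ‖ω‖, where ℒ := L_x ∘ L_y; consequently the linear map ℒ on the space of grid functions is bijective. (Equivalently, ‖ℒ ω‖ ≤ ‖ω‖ ≤ ‖ℒ⁻¹ ω‖ ≤ (16/11)²·‖ω‖ for all ω.) -/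
/-! Since `δ_x² ω = (τ ω - 2ω + τ⁻¹ ω) / hx²` for the translation `τ` by `(1, 0)`, we get
`L_x = (1 - 2c)·Id + c·τ + c·τ⁻¹` with `c = 1/24` (and `c = 0` if `hx = 0`, where division by
zero makes `L_x` the identity; hence the coefficient `hx ^ 2 / hx ^ 2 / 24` below). Translations
are isometries of the discrete `L²` norm, so the triangle inequality gives
`(1 - 4c)‖ω‖ ≤ ‖L_x ω‖ ≤ ‖ω‖`, i.e. `(5/6)‖ω‖ ≤ ‖L_x ω‖ ≤ ‖ω‖`, and likewise for `L_y`. Composing,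
`(11/16)² < (5/6)² ≤ ‖ℒ ω‖ / ‖ω‖ ≤ 1`; the lower bound makes `ℒ` injective, hence bijective in
finite dimension. The weight `hx·hy` only rescales the norm by `√(hx·hy)`. -/

open Finset

variable {Nx Ny : ℕ}

section SecondDifference

variable {V : Type*} [SeminormedAddCommGroup V] [NormedSpace ℝ V] {u v w : V} {c : ℝ}

theorem norm_add_smul_secondDiff_le (hu : ‖u‖ = ‖v‖) (hw : ‖w‖ = ‖v‖) (hc₀ : 0 ≤ c)
    (hc : c ≤ 1 / 2) : ‖v + c • (u - (2 : ℝ) • v + w)‖ ≤ ‖v‖ :=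
  calc ‖v + c • (u - (2 : ℝ) • v + w)‖ = ‖(1 - 2 * c) • v + c • u + c • w‖ := by
        congr 1; module
    _ ≤ ‖(1 - 2 * c) • v‖ + ‖c • u‖ + ‖c • w‖ := norm_add₃_le
    _ = ‖v‖ := by
        rw [norm_smul, norm_smul, norm_smul, hu, hw, Real.norm_of_nonneg hc₀,
          Real.norm_of_nonneg (by linarith)]
        ring

theorem one_sub_four_mul_mul_norm_le_norm_add_smul_secondDiff (hu : ‖u‖ = ‖v‖)
    (hw : ‖w‖ = ‖v‖) (hc₀ : 0 ≤ c) :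
    (1 - 4 * c) * ‖v‖ ≤ ‖v + c • (u - (2 : ℝ) • v + w)‖ :=
  calc (1 - 4 * c) * ‖v‖ ≤ ‖(1 - 2 * c) • v‖ - ‖c • u‖ - ‖c • w‖ := by
        rw [norm_smul, norm_smul, norm_smul, hu, hw, Real.norm_of_nonneg hc₀, Real.norm_eq_abs]
        nlinarith [le_abs_self (1 - 2 * c), norm_nonneg v]
    _ ≤ ‖v + c • (u - (2 : ℝ) • v + w)‖ := by
        have h : (1 - 2 * c) • v = (v + c • (u - (2 : ℝ) • v + w)) - c • u - c • w := by module
        rw [h]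
        linarith [norm_sub_le (v + c • (u - (2 : ℝ) • v + w) - c • u) (c • w),
          norm_sub_le (v + c • (u - (2 : ℝ) • v + w)) (c • u)]

end SecondDifference

section Translation

variable {G : Type*} [AddGroup G]

theorem norm_toLp_comp_add_right [Fintype G] (ω : G → ℝ) (a : G) :
    ‖WithLp.toLp 2 (fun p => ω (p + a))‖ = ‖WithLp.toLp 2 ω‖ := by
  simp only [EuclideanSpace.norm_eq]
  congr 1
  exact Fintype.sum_equiv (Equiv.addRight a) _ _ fun _ => rfl

def secondDiff (a : G) : (G → ℝ) →ₗ[ℝ] G → ℝ :=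
  LinearMap.funLeft ℝ ℝ (· + a) - 2 • LinearMap.id + LinearMap.funLeft ℝ ℝ (· - a)

theorem secondDiff_apply (a : G) (ω : G → ℝ) (p : G) :
    secondDiff a ω p = ω (p + a) - 2 * ω p + ω (p - a) := by
  simp [secondDiff, LinearMap.funLeft_apply]

def compactOp (c : ℝ) (a : G) : (G → ℝ) →ₗ[ℝ] G → ℝ :=
  LinearMap.id + c • secondDiff a

variable {c : ℝ} (a : G) (ω : G → ℝ)

theorem toLp_compactOp :
    WithLp.toLp 2 (compactOp c a ω) = WithLp.toLp 2 ω + c • (WithLp.toLp 2 (fun p => ω (p + a))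
      - (2 : ℝ) • WithLp.toLp 2 ω + WithLp.toLp 2 (fun p => ω (p + -a))) := by
  ext p
  simp only [compactOp, LinearMap.add_apply, LinearMap.id_apply, LinearMap.smul_apply,
    Pi.add_apply, Pi.smul_apply, secondDiff_apply, smul_eq_mul, PiLp.add_apply, PiLp.neg_apply,
    PiLp.smul_apply, sub_eq_add_neg]

variable [Fintype G]

theorem norm_toLp_compactOp_le (hc₀ : 0 ≤ c) (hc : c ≤ 1 / 2) :
    ‖WithLp.toLp 2 (compactOp c a ω)‖ ≤ ‖WithLp.toLp 2 ω‖ := by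
  rw [toLp_compactOp]
  exact norm_add_smul_secondDiff_le (norm_toLp_comp_add_right ω a)
    (norm_toLp_comp_add_right ω (-a)) hc₀ hc

theorem one_sub_four_mul_mul_norm_toLp_le_norm_toLp_compactOp (hc₀ : 0 ≤ c) :
    (1 - 4 * c) * ‖WithLp.toLp 2 ω‖ ≤ ‖WithLp.toLp 2 (compactOp c a ω)‖ := by
  rw [toLp_compactOp]
  exact one_sub_four_mul_mul_norm_le_norm_add_smul_secondDiff (norm_toLp_comp_add_right ω a)
    (norm_toLp_comp_add_right ω (-a)) hc₀

end Translation

theorem opLx_eq_compactOp (hx : ℝ) :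
    opLx hx = ⇑(compactOp (hx ^ 2 / hx ^ 2 / 24) ((1, 0) : ZMod Nx × ZMod Ny)) := by
  ext ω ⟨i, j⟩
  simp only [opLx, dxx, compactOp, LinearMap.add_apply, LinearMap.smul_apply, LinearMap.id_apply,
    Pi.add_apply, Pi.smul_apply, smul_eq_mul, secondDiff_apply, Prod.mk_add_mk, Prod.mk_sub_mk,
    add_zero, sub_zero]
  ring

theorem opLy_eq_compactOp (hy : ℝ) :
    opLy hy = ⇑(compactOp (hy ^ 2 / hy ^ 2 / 24) ((0, 1) : ZMod Nx × ZMod Ny)) := by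
  ext ω ⟨i, j⟩
  simp only [opLy, dyy, compactOp, LinearMap.add_apply, LinearMap.smul_apply, LinearMap.id_apply,
    Pi.add_apply, Pi.smul_apply, smul_eq_mul, secondDiff_apply, Prod.mk_add_mk, Prod.mk_sub_mk,
    add_zero, sub_zero]
  ring

theorem sq_div_sq_div_mem_Icc (h : ℝ) : h ^ 2 / h ^ 2 / 24 ∈ Set.Icc (0 : ℝ) (1 / 24) :=
  ⟨by positivity, by gcongr; exact div_self_le_one _⟩

theorem opLL_eq_comp (hx hy : ℝ) :
    opLL hx hy = ⇑(compactOp (hx ^ 2 / hx ^ 2 / 24) ((1, 0) : ZMod Nx × ZMod Ny) ∘ₗ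
      compactOp (hy ^ 2 / hy ^ 2 / 24) (0, 1)) := by
  ext ω
  simp [opLL, opLx_eq_compactOp, opLy_eq_compactOp]

section Composition

variable {G : Type*} [AddGroup G] [Fintype G] {c d : ℝ}

theorem five_div_six_mul_norm_toLp_le_norm_toLp_compactOp (hc : c ∈ Set.Icc (0 : ℝ) (1 / 24))
    (a : G) (ω : G → ℝ) : 5 / 6 * ‖WithLp.toLp 2 ω‖ ≤ ‖WithLp.toLp 2 (compactOp c a ω)‖ :=
  le_trans (by gcongr; linarith [hc.2])
    (one_sub_four_mul_mul_norm_toLp_le_norm_toLp_compactOp a ω hc.1)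

theorem norm_toLp_compactOp_comp_bounds (hc : c ∈ Set.Icc (0 : ℝ) (1 / 24))
    (hd : d ∈ Set.Icc (0 : ℝ) (1 / 24)) (a b : G) (ω : G → ℝ) :
    (5 / 6) ^ 2 * ‖WithLp.toLp 2 ω‖ ≤ ‖WithLp.toLp 2 (compactOp c a (compactOp d b ω))‖ ∧
      ‖WithLp.toLp 2 (compactOp c a (compactOp d b ω))‖ ≤ ‖WithLp.toLp 2 ω‖ := by
  constructor
  · calc (5 / 6) ^ 2 * ‖WithLp.toLp 2 ω‖ = 5 / 6 * (5 / 6 * ‖WithLp.toLp 2 ω‖) := by ring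
      _ ≤ 5 / 6 * ‖WithLp.toLp 2 (compactOp d b ω)‖ := by
          gcongr; exact five_div_six_mul_norm_toLp_le_norm_toLp_compactOp hd b ω
      _ ≤ _ := five_div_six_mul_norm_toLp_le_norm_toLp_compactOp hc a _
  · exact (norm_toLp_compactOp_le a _ hc.1 (by linarith [hc.2])).trans
      (norm_toLp_compactOp_le b ω hd.1 (by linarith [hd.2]))

end Composition

theorem bijective_of_mul_norm_toLp_le_norm_toLp {ι : Type*} [Fintype ι]
    (T : (ι → ℝ) →ₗ[ℝ] ι → ℝ) {m : ℝ} (hm : 0 < m)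
    (hT : ∀ ω, m * ‖WithLp.toLp 2 ω‖ ≤ ‖WithLp.toLp 2 (T ω)‖) : Function.Bijective T := by
  have hinj : Function.Injective T := by
    rw [← LinearMap.ker_eq_bot, LinearMap.ker_eq_bot']
    intro ω hω
    have h := hT ω
    rw [hω, WithLp.toLp_zero, norm_zero] at h
    have hω0 : ‖WithLp.toLp 2 ω‖ ≤ 0 := nonpos_of_mul_nonpos_right h hm
    simpa using hω0
  exact ⟨hinj, LinearMap.injective_iff_surjective.mp hinj⟩

theorem gnorm_eq_sqrt_mul_norm_toLp [NeZero Nx] [NeZero Ny] (hx hy : ℝ) (ω : GridFn Nx Ny) :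
    gnorm hx hy ω = √(hx * hy) * ‖WithLp.toLp 2 ω‖ := by
  rw [gnorm, gip, EuclideanSpace.norm_eq, ← Real.sqrt_mul' _ (by positivity), Finset.mul_sum]
  congr 1
  refine Finset.sum_congr rfl fun p _ => ?_
  simp only [Real.norm_eq_abs, sq_abs]
  ring

theorem compact_op_LL_bounds_general [NeZero Nx] [NeZero Ny]
    (hx hy : ℝ) :
    (∀ ω : GridFn Nx Ny,
      (11 / 16) ^ 2 * gnorm hx hy ω ≤ gnorm hx hy (opLL hx hy ω) ∧
      gnorm hx hy (opLL hx hy ω) ≤ gnorm hx hy ω) ∧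
    Function.Bijective (opLL hx hy : GridFn Nx Ny → GridFn Nx Ny) := by
  have bounds := norm_toLp_compactOp_comp_bounds (sq_div_sq_div_mem_Icc hx)
    (sq_div_sq_div_mem_Icc hy) ((1, 0) : ZMod Nx × ZMod Ny) (0, 1)
  rw [opLL_eq_comp]
  refine ⟨fun ω => ?_, bijective_of_mul_norm_toLp_le_norm_toLp _ (by norm_num) (bounds · |>.1)⟩
  simp only [gnorm_eq_sqrt_mul_norm_toLp, LinearMap.comp_apply]
  constructor
  · calc (11 / 16) ^ 2 * (√(hx * hy) * ‖WithLp.toLp 2 ω‖)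
        ≤ √(hx * hy) * ((5 / 6) ^ 2 * ‖WithLp.toLp 2 ω‖) := by
          rw [mul_left_comm]; gcongr _ * (?_ * _); norm_num
      _ ≤ _ := by gcongr; exact (bounds ω).1
  · gcongr; exact (bounds ω).2

/-- **Lemma 3.3 for `ℒ = L_x ∘ L_y`.**  `(11/16)²·‖ω‖ ≤ ‖ℒω‖ ≤ ‖ω‖`, hence `ℒ`
is bijective (equivalently `‖ℒω‖ ≤ ‖ω‖ ≤ ‖ℒ⁻¹ω‖ ≤ (16/11)²·‖ω‖`). -/
theorem compact_op_LL_bounds [NeZero Nx] [NeZero Ny]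
    (hx hy : ℝ) (hhx : 0 < hx) (hhy : 0 < hy) :
    (∀ ω : GridFn Nx Ny,
      (11 / 16) ^ 2 * gnorm hx hy ω ≤ gnorm hx hy (opLL hx hy ω) ∧
      gnorm hx hy (opLL hx hy ω) ≤ gnorm hx hy ω) ∧
    Function.Bijective (opLL hx hy : GridFn Nx Ny → GridFn Nx Ny) :=
  compact_op_LL_bounds_general hx hy
end
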